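/- The rational queer R-matrix satisfies the quantum Yang-Baxter equation: R^ℏ₁₂(u,v)R^ℏ₁₃(u,w)R^ℏ₂₃(v,w) = R^ℏ₂₃(v,w)R^ℏ₁₃(u,w)R^ℏ₁₂(u,v) in End(ℂ^{N|N})^⊗3, where R^ℏ₁₂(u,v) = (1/ℏ)·Id + P₁₂/(u−v) + J₁J₂P₁₂/(u+v), for generic parameters (all of ℏ, u−v, u−w, v−w, u+v, u+w, v+w nonzero, and 1/ℏ² − 1/(u−v)² − 1/(u+v)² ≠ 0 etc. as needed). -/

import Mathlib

open Matrix BigOperators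

noncomputable section

/-- Index set `{±1,…,±N}`: `false` codes a positive index, `true` a negative one. -/
abbrev Idx (N : ℕ) := Bool × Fin N

/-- Parity: positive indices are even, negative indices are odd. -/
def pty {N : ℕ} (i : Idx N) : ℕ := if i.1 then 1 else 0

/-- The index `-i`. -/
def nneg {N : ℕ} (i : Idx N) : Idx N := (!i.1, i.2)

/-- Matrix unit `e_{ij}` in `End(ℂ^{N|N})`. -/
def Em {N : ℕ} (i j : Idx N) : Matrix (Idx N) (Idx N) ℂ := Matrix.single i j 1

/-- `J = Σ_i (-1)^{p_i} e_{i,-i}`. -/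
def Jmat (N : ℕ) : Matrix (Idx N) (Idx N) ℂ := ∑ i : Idx N, ((-1 : ℂ) ^ pty i) • Em i (nneg i)

abbrev M3 (N : ℕ) := Matrix (Idx N × Idx N × Idx N) (Idx N × Idx N × Idx N) ℂ

/-- Graded (Koszul-sign) Kronecker product of three homogeneous matrices acting on
`(ℂ^{N|N})^{⊗3}`; `db`, `dc` are the `ℤ₂`-degrees of `b` and `c`. -/
def gk3 {N : ℕ} (a b c : Matrix (Idx N) (Idx N) ℂ) (db dc : ℕ) : M3 N :=
  fun x y => (-1 : ℂ) ^ (db * pty y.1 + dc * (pty y.1 + pty y.2.1)) *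
    (a x.1 y.1 * (b x.2.1 y.2.1 * c x.2.2 y.2.2))

/-- Superpermutation `P₁₂ = Σ_{i,j} (-1)^{p_j} e_{ij} ⊗ e_{ji} ⊗ 1`. -/
def P12 (N : ℕ) : M3 N :=
  ∑ i : Idx N, ∑ j : Idx N, ((-1 : ℂ) ^ pty j) • gk3 (Em i j) (Em j i) 1 (pty i + pty j) 0

/-- Superpermutation `P₁₃ = Σ_{i,j} (-1)^{p_j} e_{ij} ⊗ 1 ⊗ e_{ji}`. -/
def P13 (N : ℕ) : M3 N :=
  ∑ i : Idx N, ∑ j : Idx N, ((-1 : ℂ) ^ pty j) • gk3 (Em i j) 1 (Em j i) 0 (pty i + pty j)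

/-- Superpermutation `P₂₃ = Σ_{i,j} (-1)^{p_j} 1 ⊗ e_{ij} ⊗ e_{ji}`. -/
def P23 (N : ℕ) : M3 N :=
  ∑ i : Idx N, ∑ j : Idx N,
    ((-1 : ℂ) ^ pty j) • gk3 1 (Em i j) (Em j i) (pty i + pty j) (pty i + pty j)

/-- `J` acting on the first tensor factor of `(ℂ^{N|N})^{⊗3}`. -/
def J1 (N : ℕ) : M3 N := gk3 (Jmat N) 1 1 0 0
/-- `J` acting on the second tensor factor (with Koszul signs). -/
def J2 (N : ℕ) : M3 N := gk3 1 (Jmat N) 1 1 0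
/-- `J` acting on the third tensor factor (with Koszul signs). -/
def J3 (N : ℕ) : M3 N := gk3 1 1 (Jmat N) 0 1

/-- The rational queer R-matrix on legs 1,2: `(1/ℏ)·Id + P₁₂/(u−v) + J₁J₂P₁₂/(u+v)`. -/
def Rr12 (N : ℕ) (h u v : ℂ) : M3 N :=
  h⁻¹ • (1 : M3 N) + (u - v)⁻¹ • P12 N + (u + v)⁻¹ • (J1 N * J2 N * P12 N)

/-- The rational queer R-matrix on legs 1,3. -/
def Rr13 (N : ℕ) (h u v : ℂ) : M3 N :=
  h⁻¹ • (1 : M3 N) + (u - v)⁻¹ • P13 N + (u + v)⁻¹ • (J1 N * J3 N * P13 N)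

/-- The rational queer R-matrix on legs 2,3. -/
def Rr23 (N : ℕ) (h u v : ℂ) : M3 N :=
  h⁻¹ • (1 : M3 N) + (u - v)⁻¹ • P23 N + (u + v)⁻¹ • (J2 N * J3 N * P23 N)


/-- Kronecker delta, kept opaque so that `ring` treats it as an atom. -/
def dlt {N : ℕ} (t y : Idx N × Idx N × Idx N) : ℂ := if y = t then 1 else 0

/-- A signed "monomial" matrix: `ε(x)` in position `(x, f x)`. -/
def mono {N : ℕ} (ε : Idx N × Idx N × Idx N → ℂ)
    (f : Idx N × Idx N × Idx N → Idx N × Idx N × Idx N) : M3 N :=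
  Matrix.of fun x y => ε x * dlt (f x) y

lemma mono_mul {N : ℕ} (ε ε' : Idx N × Idx N × Idx N → ℂ)
    (f f' : Idx N × Idx N × Idx N → Idx N × Idx N × Idx N) :
    mono ε f * mono ε' f' = mono (fun x => ε x * ε' (f x)) (fun x => f' (f x)) := by
  ext x y
  simp only [mono, dlt, Matrix.mul_apply, Matrix.of_apply, mul_ite, ite_mul, mul_zero, zero_mul,
    mul_one, one_mul]
  rw [Finset.sum_eq_single (f x)]
  · simp
  · intro b _ hb; simp [hb]
  · simp

lemma one_eq_mono {N : ℕ} : (1 : M3 N) = mono (fun _ => 1) (fun x => x) := by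
  ext x y
  simp [mono, dlt, Matrix.one_apply, eq_comm]

lemma Jmat_apply {N : ℕ} (x y : Idx N) :
    Jmat N x y = (-1 : ℂ) ^ pty x * if y = nneg x then 1 else 0 := by
  simp only [Jmat, Matrix.sum_apply, Matrix.smul_apply, smul_eq_mul, Em,
    Matrix.single, Matrix.of_apply]
  rw [Finset.sum_eq_single x]
  · by_cases h : y = nneg x <;> simp [h, eq_comm]
  · intro b _ hb; simp [hb]
  · simp

lemma P12_eq (N : ℕ) : P12 N = mono
    (fun x => (-1 : ℂ) ^ (pty x.2.1 + (pty x.1 + pty x.2.1) * pty x.2.1))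
    (fun x => (x.2.1, x.1, x.2.2)) := by
  ext x y
  obtain ⟨x1, x2, x3⟩ := x
  obtain ⟨y1, y2, y3⟩ := y
  simp only [P12, Matrix.sum_apply, Matrix.smul_apply, smul_eq_mul, gk3, Em,
    Matrix.single, Matrix.of_apply, Matrix.one_apply, mono, dlt, Prod.mk.injEq]
  rw [Finset.sum_eq_single x1]
  · rw [Finset.sum_eq_single y1]
    · by_cases h1 : y1 = x2
      · subst h1
        by_cases h2 : y2 = x1
        · subst h2
          by_cases h3 : y3 = x3
          · subst h3; simp; try ring
          · simp [h3, Ne.symm h3]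
        · simp [h2, Ne.symm h2]
      · simp [h1, Ne.symm h1]
    · intro b _ hb; simp [hb, Ne.symm hb]
    · simp
  · intro b _ hb; simp [hb, Ne.symm hb]
  · simp

lemma P13_eq (N : ℕ) : P13 N = mono
    (fun x => (-1 : ℂ) ^ (pty x.2.2 + (pty x.1 + pty x.2.2) * (pty x.2.2 + pty x.2.1)))
    (fun x => (x.2.2, x.2.1, x.1)) := by
  ext x y
  obtain ⟨x1, x2, x3⟩ := x
  obtain ⟨y1, y2, y3⟩ := y
  simp only [P13, Matrix.sum_apply, Matrix.smul_apply, smul_eq_mul, gk3, Em,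
    Matrix.single, Matrix.of_apply, Matrix.one_apply, mono, dlt, Prod.mk.injEq]
  rw [Finset.sum_eq_single x1]
  · rw [Finset.sum_eq_single y1]
    · by_cases h1 : y1 = x3
      · subst h1
        by_cases h2 : y2 = x2
        · subst h2
          by_cases h3 : y3 = x1
          · subst h3; simp; try ring
          · simp [h3, Ne.symm h3]
        · simp [h2, Ne.symm h2]
      · simp [h1, Ne.symm h1]
    · intro b _ hb; simp [hb, Ne.symm hb]
    · simp
  · intro b _ hb; simp [hb, Ne.symm hb]
  · simp

lemma P23_eq (N : ℕ) : P23 N = mono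
    (fun x => (-1 : ℂ) ^ (pty x.2.2 + (pty x.2.1 + pty x.2.2) * pty x.1 +
      (pty x.2.1 + pty x.2.2) * (pty x.1 + pty x.2.2)))
    (fun x => (x.1, x.2.2, x.2.1)) := by
  ext x y
  obtain ⟨x1, x2, x3⟩ := x
  obtain ⟨y1, y2, y3⟩ := y
  simp only [P23, Matrix.sum_apply, Matrix.smul_apply, smul_eq_mul, gk3, Em,
    Matrix.single, Matrix.of_apply, Matrix.one_apply, mono, dlt, Prod.mk.injEq]
  rw [Finset.sum_eq_single x2]
  · rw [Finset.sum_eq_single y2]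
    · by_cases h1 : y1 = x1
      · subst h1
        by_cases h2 : y2 = x3
        · subst h2
          by_cases h3 : y3 = x2
          · subst h3; simp; try ring
          · simp [h3, Ne.symm h3]
        · simp [h2, Ne.symm h2]
      · simp [h1, Ne.symm h1]
    · intro b _ hb; simp [hb, Ne.symm hb]
    · simp
  · intro b _ hb; simp [hb, Ne.symm hb]
  · simp

lemma J1_eq (N : ℕ) : J1 N = mono (fun x => (-1 : ℂ) ^ pty x.1)
    (fun x => (nneg x.1, x.2.1, x.2.2)) := by
  ext x y
  obtain ⟨x1, x2, x3⟩ := x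
  obtain ⟨y1, y2, y3⟩ := y
  simp only [J1, gk3, Jmat_apply, Matrix.one_apply, mono, dlt, Matrix.of_apply, Prod.mk.injEq]
  by_cases h1 : y1 = nneg x1
  · subst h1
    by_cases h2 : y2 = x2
    · subst h2
      by_cases h3 : y3 = x3
      · subst h3; simp; try ring
      · simp [h3, Ne.symm h3]
    · simp [h2, Ne.symm h2]
  · simp [h1, Ne.symm h1]

lemma J2_eq (N : ℕ) : J2 N = mono (fun x => (-1 : ℂ) ^ (pty x.1 + pty x.2.1))
    (fun x => (x.1, nneg x.2.1, x.2.2)) := by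
  ext x y
  obtain ⟨x1, x2, x3⟩ := x
  obtain ⟨y1, y2, y3⟩ := y
  simp only [J2, gk3, Jmat_apply, Matrix.one_apply, mono, dlt, Matrix.of_apply, Prod.mk.injEq]
  by_cases h1 : y1 = x1
  · subst h1
    by_cases h2 : y2 = nneg x2
    · subst h2
      by_cases h3 : y3 = x3
      · subst h3; simp; try ring
      · simp [h3, Ne.symm h3]
    · simp [h2, Ne.symm h2]
  · simp [h1, Ne.symm h1]

lemma J3_eq (N : ℕ) : J3 N = mono (fun x => (-1 : ℂ) ^ (pty x.1 + pty x.2.1 + pty x.2.2))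
    (fun x => (x.1, x.2.1, nneg x.2.2)) := by
  ext x y
  obtain ⟨x1, x2, x3⟩ := x
  obtain ⟨y1, y2, y3⟩ := y
  simp only [J3, gk3, Jmat_apply, Matrix.one_apply, mono, dlt, Matrix.of_apply, Prod.mk.injEq]
  by_cases h1 : y1 = x1
  · subst h1
    by_cases h2 : y2 = x2
    · subst h2
      by_cases h3 : y3 = nneg x3
      · subst h3; simp; try ring
      · simp [h3, Ne.symm h3]
    · simp [h2, Ne.symm h2]
  · simp [h1, Ne.symm h1]

set_option maxHeartbeats 40000000 in
/-- The rational queer R-matrix satisfies the quantum Yang–Baxter equation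
`R^ℏ₁₂(u,v)R^ℏ₁₃(u,w)R^ℏ₂₃(v,w) = R^ℏ₂₃(v,w)R^ℏ₁₃(u,w)R^ℏ₁₂(u,v)` for generic parameters. -/
theorem rational_queer_QYBE (N : ℕ) (h u v w : ℂ)
    (hh : h ≠ 0) (huv : u - v ≠ 0) (huw : u - w ≠ 0) (hvw : v - w ≠ 0)
    (huv' : u + v ≠ 0) (huw' : u + w ≠ 0) (hvw' : v + w ≠ 0)
    (hf1 : 1 / h ^ 2 - 1 / (u - v) ^ 2 - 1 / (u + v) ^ 2 ≠ 0)
    (hf2 : 1 / h ^ 2 - 1 / (u - w) ^ 2 - 1 / (u + w) ^ 2 ≠ 0)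
    (hf3 : 1 / h ^ 2 - 1 / (v - w) ^ 2 - 1 / (v + w) ^ 2 ≠ 0) :
    Rr12 N h u v * Rr13 N h u w * Rr23 N h v w =
      Rr23 N h v w * Rr13 N h u w * Rr12 N h u v := by
  rw [Rr12, Rr13, Rr23, one_eq_mono, P12_eq, P13_eq, P23_eq, J1_eq, J2_eq, J3_eq]
  simp only [mono_mul, smul_mul_assoc, mul_smul_comm, add_mul, mul_add, smul_smul]
  ext x y
  obtain ⟨⟨a1, k1⟩, ⟨a2, k2⟩, ⟨a3, k3⟩⟩ := x
  simp only [Matrix.add_apply, Matrix.smul_apply, mono, Matrix.of_apply, smul_eq_mul]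
  have hR1 : (u-v)⁻¹*(v-w)⁻¹ = (u-w)⁻¹*(u-v)⁻¹ + (u-w)⁻¹*(v-w)⁻¹ := by
    field_simp
    ring
  have hR2 : (u+v)⁻¹*(v+w)⁻¹ = (u-w)⁻¹*(v+w)⁻¹ - (u-w)⁻¹*(u+v)⁻¹ := by
    field_simp
    ring
  have hR3 : (u-v)⁻¹*(v+w)⁻¹ = (u+w)⁻¹*(u-v)⁻¹ + (u+w)⁻¹*(v+w)⁻¹ := by
    field_simp
    ring
  have hR4 : (u+v)⁻¹*(v-w)⁻¹ = (u+w)⁻¹*(v-w)⁻¹ - (u+w)⁻¹*(u+v)⁻¹ := by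
    field_simp
    ring
  rcases a1 <;> rcases a2 <;> rcases a3
  · norm_num [pty, nneg, -mul_ite, -ite_mul]
    linear_combination
      (h⁻¹ * dlt (((false, k2), ((false, k3), (false, k1)))) y - h⁻¹ * dlt (((false, k3), ((false, k1), (false, k2)))) y - (u+w)⁻¹ * dlt (((false, k3), ((true, k2), (true, k1)))) y + (u+w)⁻¹ * dlt (((true, k3), ((true, k2), (false, k1)))) y) * hR1 +
      (-h⁻¹ * dlt (((true, k2), ((true, k3), (false, k1)))) y - h⁻¹ * dlt (((false, k3), ((true, k1), (true, k2)))) y - (u+w)⁻¹ * dlt (((false, k3), ((true, k2), (true, k1)))) y + (u+w)⁻¹ * dlt (((true, k3), ((true, k2), (false, k1)))) y) * hR2 +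
      (h⁻¹ * dlt (((false, k2), ((true, k3), (true, k1)))) y + (u-w)⁻¹ * dlt (((false, k3), ((true, k2), (true, k1)))) y - h⁻¹ * dlt (((true, k3), ((false, k1), (true, k2)))) y - (u-w)⁻¹ * dlt (((true, k3), ((true, k2), (false, k1)))) y) * hR3 +
      (h⁻¹ * dlt (((true, k2), ((false, k3), (true, k1)))) y + (u-w)⁻¹ * dlt (((false, k3), ((true, k2), (true, k1)))) y - h⁻¹ * dlt (((true, k3), ((true, k1), (false, k2)))) y - (u-w)⁻¹ * dlt (((true, k3), ((true, k2), (false, k1)))) y) * hR4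
  · norm_num [pty, nneg, -mul_ite, -ite_mul]
    linear_combination
      (h⁻¹ * dlt (((false, k2), ((true, k3), (false, k1)))) y - h⁻¹ * dlt (((true, k3), ((false, k1), (false, k2)))) y - (u+w)⁻¹ * dlt (((true, k3), ((true, k2), (true, k1)))) y + (u+w)⁻¹ * dlt (((false, k3), ((true, k2), (false, k1)))) y) * hR1 +
      (h⁻¹ * dlt (((true, k2), ((false, k3), (false, k1)))) y - h⁻¹ * dlt (((true, k3), ((true, k1), (true, k2)))) y - (u+w)⁻¹ * dlt (((true, k3), ((true, k2), (true, k1)))) y + (u+w)⁻¹ * dlt (((false, k3), ((true, k2), (false, k1)))) y) * hR2 +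
      (h⁻¹ * dlt (((false, k2), ((false, k3), (true, k1)))) y + (u-w)⁻¹ * dlt (((true, k3), ((true, k2), (true, k1)))) y - h⁻¹ * dlt (((false, k3), ((false, k1), (true, k2)))) y - (u-w)⁻¹ * dlt (((false, k3), ((true, k2), (false, k1)))) y) * hR3 +
      (-h⁻¹ * dlt (((true, k2), ((true, k3), (true, k1)))) y + (u-w)⁻¹ * dlt (((true, k3), ((true, k2), (true, k1)))) y - h⁻¹ * dlt (((false, k3), ((true, k1), (false, k2)))) y - (u-w)⁻¹ * dlt (((false, k3), ((true, k2), (false, k1)))) y) * hR4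
  · norm_num [pty, nneg, -mul_ite, -ite_mul]
    linear_combination
      (h⁻¹ * dlt (((true, k2), ((false, k3), (false, k1)))) y - h⁻¹ * dlt (((false, k3), ((false, k1), (true, k2)))) y - (u+w)⁻¹ * dlt (((false, k3), ((false, k2), (true, k1)))) y - (u+w)⁻¹ * dlt (((true, k3), ((false, k2), (false, k1)))) y) * hR1 +
      (-h⁻¹ * dlt (((false, k2), ((true, k3), (false, k1)))) y + h⁻¹ * dlt (((false, k3), ((true, k1), (false, k2)))) y - (u+w)⁻¹ * dlt (((false, k3), ((false, k2), (true, k1)))) y - (u+w)⁻¹ * dlt (((true, k3), ((false, k2), (false, k1)))) y) * hR2 +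
      (h⁻¹ * dlt (((true, k2), ((true, k3), (true, k1)))) y + (u-w)⁻¹ * dlt (((false, k3), ((false, k2), (true, k1)))) y + h⁻¹ * dlt (((true, k3), ((false, k1), (false, k2)))) y + (u-w)⁻¹ * dlt (((true, k3), ((false, k2), (false, k1)))) y) * hR3 +
      (h⁻¹ * dlt (((false, k2), ((false, k3), (true, k1)))) y + (u-w)⁻¹ * dlt (((false, k3), ((false, k2), (true, k1)))) y - h⁻¹ * dlt (((true, k3), ((true, k1), (true, k2)))) y + (u-w)⁻¹ * dlt (((true, k3), ((false, k2), (false, k1)))) y) * hR4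
  · norm_num [pty, nneg, -mul_ite, -ite_mul]
    linear_combination
      (h⁻¹ * dlt (((true, k2), ((true, k3), (false, k1)))) y + h⁻¹ * dlt (((true, k3), ((false, k1), (true, k2)))) y + (u+w)⁻¹ * dlt (((true, k3), ((false, k2), (true, k1)))) y + (u+w)⁻¹ * dlt (((false, k3), ((false, k2), (false, k1)))) y) * hR1 +
      (h⁻¹ * dlt (((false, k2), ((false, k3), (false, k1)))) y - h⁻¹ * dlt (((true, k3), ((true, k1), (false, k2)))) y + (u+w)⁻¹ * dlt (((true, k3), ((false, k2), (true, k1)))) y + (u+w)⁻¹ * dlt (((false, k3), ((false, k2), (false, k1)))) y) * hR2 +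
      (h⁻¹ * dlt (((true, k2), ((false, k3), (true, k1)))) y - (u-w)⁻¹ * dlt (((true, k3), ((false, k2), (true, k1)))) y - h⁻¹ * dlt (((false, k3), ((false, k1), (false, k2)))) y - (u-w)⁻¹ * dlt (((false, k3), ((false, k2), (false, k1)))) y) * hR3 +
      (-h⁻¹ * dlt (((false, k2), ((true, k3), (true, k1)))) y - (u-w)⁻¹ * dlt (((true, k3), ((false, k2), (true, k1)))) y + h⁻¹ * dlt (((false, k3), ((true, k1), (true, k2)))) y - (u-w)⁻¹ * dlt (((false, k3), ((false, k2), (false, k1)))) y) * hR4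
  · norm_num [pty, nneg, -mul_ite, -ite_mul]
    linear_combination
      (h⁻¹ * dlt (((false, k2), ((false, k3), (true, k1)))) y - h⁻¹ * dlt (((false, k3), ((true, k1), (false, k2)))) y + (u+w)⁻¹ * dlt (((false, k3), ((true, k2), (false, k1)))) y + (u+w)⁻¹ * dlt (((true, k3), ((true, k2), (true, k1)))) y) * hR1 +
      (-h⁻¹ * dlt (((true, k2), ((true, k3), (true, k1)))) y - h⁻¹ * dlt (((false, k3), ((false, k1), (true, k2)))) y + (u+w)⁻¹ * dlt (((false, k3), ((true, k2), (false, k1)))) y + (u+w)⁻¹ * dlt (((true, k3), ((true, k2), (true, k1)))) y) * hR2 +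
      (-h⁻¹ * dlt (((false, k2), ((true, k3), (false, k1)))) y - (u-w)⁻¹ * dlt (((false, k3), ((true, k2), (false, k1)))) y + h⁻¹ * dlt (((true, k3), ((true, k1), (true, k2)))) y - (u-w)⁻¹ * dlt (((true, k3), ((true, k2), (true, k1)))) y) * hR3 +
      (-h⁻¹ * dlt (((true, k2), ((false, k3), (false, k1)))) y - (u-w)⁻¹ * dlt (((false, k3), ((true, k2), (false, k1)))) y + h⁻¹ * dlt (((true, k3), ((false, k1), (false, k2)))) y - (u-w)⁻¹ * dlt (((true, k3), ((true, k2), (true, k1)))) y) * hR4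
  · norm_num [pty, nneg, -mul_ite, -ite_mul]
    linear_combination
      (-h⁻¹ * dlt (((false, k2), ((true, k3), (true, k1)))) y + h⁻¹ * dlt (((true, k3), ((true, k1), (false, k2)))) y - (u+w)⁻¹ * dlt (((true, k3), ((true, k2), (false, k1)))) y - (u+w)⁻¹ * dlt (((false, k3), ((true, k2), (true, k1)))) y) * hR1 +
      (-h⁻¹ * dlt (((true, k2), ((false, k3), (true, k1)))) y + h⁻¹ * dlt (((true, k3), ((false, k1), (true, k2)))) y - (u+w)⁻¹ * dlt (((true, k3), ((true, k2), (false, k1)))) y - (u+w)⁻¹ * dlt (((false, k3), ((true, k2), (true, k1)))) y) * hR2 +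
      (h⁻¹ * dlt (((false, k2), ((false, k3), (false, k1)))) y + (u-w)⁻¹ * dlt (((true, k3), ((true, k2), (false, k1)))) y - h⁻¹ * dlt (((false, k3), ((true, k1), (true, k2)))) y + (u-w)⁻¹ * dlt (((false, k3), ((true, k2), (true, k1)))) y) * hR3 +
      (-h⁻¹ * dlt (((true, k2), ((true, k3), (false, k1)))) y + (u-w)⁻¹ * dlt (((true, k3), ((true, k2), (false, k1)))) y - h⁻¹ * dlt (((false, k3), ((false, k1), (false, k2)))) y + (u-w)⁻¹ * dlt (((false, k3), ((true, k2), (true, k1)))) y) * hR4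
  · norm_num [pty, nneg, -mul_ite, -ite_mul]
    linear_combination
      (-h⁻¹ * dlt (((true, k2), ((false, k3), (true, k1)))) y - h⁻¹ * dlt (((false, k3), ((true, k1), (true, k2)))) y - (u+w)⁻¹ * dlt (((false, k3), ((false, k2), (false, k1)))) y + (u+w)⁻¹ * dlt (((true, k3), ((false, k2), (true, k1)))) y) * hR1 +
      (h⁻¹ * dlt (((false, k2), ((true, k3), (true, k1)))) y + h⁻¹ * dlt (((false, k3), ((false, k1), (false, k2)))) y - (u+w)⁻¹ * dlt (((false, k3), ((false, k2), (false, k1)))) y + (u+w)⁻¹ * dlt (((true, k3), ((false, k2), (true, k1)))) y) * hR2 +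
      (h⁻¹ * dlt (((true, k2), ((true, k3), (false, k1)))) y + (u-w)⁻¹ * dlt (((false, k3), ((false, k2), (false, k1)))) y - h⁻¹ * dlt (((true, k3), ((true, k1), (false, k2)))) y - (u-w)⁻¹ * dlt (((true, k3), ((false, k2), (true, k1)))) y) * hR3 +
      (h⁻¹ * dlt (((false, k2), ((false, k3), (false, k1)))) y + (u-w)⁻¹ * dlt (((false, k3), ((false, k2), (false, k1)))) y + h⁻¹ * dlt (((true, k3), ((false, k1), (true, k2)))) y - (u-w)⁻¹ * dlt (((true, k3), ((false, k2), (true, k1)))) y) * hR4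
  · norm_num [pty, nneg, -mul_ite, -ite_mul]
    linear_combination
      (h⁻¹ * dlt (((true, k2), ((true, k3), (true, k1)))) y - h⁻¹ * dlt (((true, k3), ((true, k1), (true, k2)))) y - (u+w)⁻¹ * dlt (((true, k3), ((false, k2), (false, k1)))) y + (u+w)⁻¹ * dlt (((false, k3), ((false, k2), (true, k1)))) y) * hR1 +
      (h⁻¹ * dlt (((false, k2), ((false, k3), (true, k1)))) y + h⁻¹ * dlt (((true, k3), ((false, k1), (false, k2)))) y - (u+w)⁻¹ * dlt (((true, k3), ((false, k2), (false, k1)))) y + (u+w)⁻¹ * dlt (((false, k3), ((false, k2), (true, k1)))) y) * hR2 +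
      (-h⁻¹ * dlt (((true, k2), ((false, k3), (false, k1)))) y + (u-w)⁻¹ * dlt (((true, k3), ((false, k2), (false, k1)))) y - h⁻¹ * dlt (((false, k3), ((true, k1), (false, k2)))) y - (u-w)⁻¹ * dlt (((false, k3), ((false, k2), (true, k1)))) y) * hR3 +
      (h⁻¹ * dlt (((false, k2), ((true, k3), (false, k1)))) y + (u-w)⁻¹ * dlt (((true, k3), ((false, k2), (false, k1)))) y + h⁻¹ * dlt (((false, k3), ((false, k1), (true, k2)))) y - (u-w)⁻¹ * dlt (((false, k3), ((false, k2), (true, k1)))) y) * hR4
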